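/- Let λ ∈ ℂ with λ ∉ {0} ∪ {1/n : n ≥ 1}, let a(λ) = Re(1/λ), and let d(λ) = dist(λ, {0} ∪ {1/n : n ≥ 1}) > 0. Then there exists a positive constant u(λ) (depending only on |λ| and d(λ)) such that u(λ) · N^{−a(λ)} ≤ ∏_{n=1}^{N} |1 − 1/(nλ)| for all N ≥ 1; explicitly one may take u(λ) = exp(−1/|λ| − 6(1+|λ|²)/(|λ|^{3/2} d(λ)^{5/2})). -/

import Mathlib

open Real Finset


lemma log_one_sub_ge {w : ℂ} (hw : ‖w‖ ≤ 1/2) :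
    -(‖w‖)^2 - w.re ≤ Real.log (‖1 - w‖) := by
  have hnn := norm_nonneg w
  have hw1 : ‖(-w : ℂ)‖ < 1 := by
    rw [norm_neg]; linarith
  have h := Complex.norm_log_one_add_sub_self_le hw1
  rw [norm_neg] at h
  have hinv : (1 - ‖w‖)⁻¹ ≤ 2 := by
    rw [inv_le_comm₀ (by linarith) (by norm_num)]
    linarith
  have h2 : ‖Complex.log (1 + -w) - -w‖ ≤ (‖w‖)^2 := by
    calc ‖Complex.log (1 + -w) - -w‖ ≤ (‖w‖)^2 * (1 - ‖w‖)⁻¹ / 2 := h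
      _ ≤ (‖w‖)^2 * 2 / 2 := by
          apply div_le_div_of_nonneg_right ?_ (by norm_num)
          exact mul_le_mul_of_nonneg_left hinv (by positivity)
      _ = (‖w‖)^2 := by ring
  have h3 : |(Complex.log (1 + -w) - -w).re| ≤ (‖w‖)^2 :=
    le_trans (Complex.abs_re_le_norm _) h2
  rw [Complex.sub_re, Complex.neg_re, Complex.log_re, abs_le] at h3
  have heq : (1 : ℂ) + -w = 1 - w := by ring
  rw [heq] at h3
  linarith [h3.1]

lemma sum_inv_sq_le (N : ℕ) : ∑ n ∈ Finset.Icc 1 N, (1:ℝ)/(n:ℝ)^2 ≤ 2 := by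
  have h : ∀ M : ℕ, 1 ≤ M → ∑ n ∈ Finset.Icc 1 M, (1:ℝ)/(n:ℝ)^2 ≤ 2 - 1/M := by
    intro M hM
    induction M with
    | zero => omega
    | succ K ih =>
      rcases Nat.eq_or_lt_of_le hM with h1 | h1
      · simp [← h1]; norm_num
      · have hK : 1 ≤ K := by omega
        rw [Finset.sum_Icc_succ_top (by omega)]
        have hK0 : (0:ℝ) < K := by positivity
        have key : (1:ℝ)/((K:ℝ)+1)^2 ≤ 1/K - 1/(K+1) := by
          rw [div_sub_div _ _ hK0.ne' (by positivity), div_le_div_iff₀ (by positivity) (by positivity)]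
          nlinarith
        have := ih hK
        push_cast
        push_cast at this
        linarith
  cases N with
  | zero => simp
  | succ K =>
    have h2 := h (K+1) (by omega)
    have h3 : (0:ℝ) ≤ 1/(((K+1):ℕ):ℝ) := by positivity
    linarith


lemma harmonic_cast (N : ℕ) : ((harmonic N : ℚ) : ℝ) = ∑ n ∈ Finset.Icc 1 N, (1:ℝ)/(n:ℝ) := by
  rw [harmonic_eq_sum_Icc]
  push_cast
  simp [one_div]

lemma harmonic_up (N : ℕ) :
    ∑ n ∈ Finset.Icc 1 N, (1:ℝ)/(n:ℝ) ≤ Real.log N + 1 := by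
  rw [← harmonic_cast]
  have := harmonic_le_one_add_log N
  linarith

lemma harmonic_lo (N : ℕ) (hN : 1 ≤ N) :
    Real.log N ≤ ∑ n ∈ Finset.Icc 1 N, (1:ℝ)/(n:ℝ) := by
  rw [← harmonic_cast]
  obtain ⟨M, rfl⟩ : ∃ M, N = M + 1 := ⟨N - 1, by omega⟩
  have h1 := log_add_one_le_harmonic M
  have h2 : ((harmonic M : ℚ):ℝ) ≤ ((harmonic (M+1) : ℚ):ℝ) := by
    rw [harmonic_succ]
    push_cast
    have : (0:ℝ) ≤ ((M:ℝ)+1)⁻¹ := by positivity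
    linarith
  push_cast at h1 h2 ⊢
  linarith


lemma rpow_sqrt {x : ℝ} (hx : 0 ≤ x) (n : ℕ) : x ^ ((n:ℝ)/2) = (Real.sqrt x) ^ n := by
  rw [show ((n:ℝ)/2) = (1/2) * n by ring, Real.rpow_mul hx, Real.rpow_natCast,
    ← Real.sqrt_eq_rpow]

lemma arith1 {r d : ℝ} (hd : 0 < d) (hdr : d ≤ r) :
    2/r^2 ≤ 6*(1+r^2)/(r ^ ((3:ℝ)/2) * d ^ ((5:ℝ)/2)) := by
  have hr : 0 < r := lt_of_lt_of_le hd hdr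
  set R := Real.sqrt r with hR
  set D := Real.sqrt d with hD
  have hR0 : 0 < R := Real.sqrt_pos.mpr hr
  have hD0 : 0 < D := Real.sqrt_pos.mpr hd
  have hDR : D ≤ R := Real.sqrt_le_sqrt hdr
  have hr2 : r = R^2 := (Real.sq_sqrt hr.le).symm
  have hd2 : d = D^2 := (Real.sq_sqrt hd.le).symm
  have h3 : r ^ ((3:ℝ)/2) = R^3 := by rw [show ((3:ℝ)/2) = ((3:ℕ):ℝ)/2 by norm_num]; exact rpow_sqrt hr.le 3
  have h5 : d ^ ((5:ℝ)/2) = D^5 := by rw [show ((5:ℝ)/2) = ((5:ℕ):ℝ)/2 by norm_num]; exact rpow_sqrt hd.le 5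
  rw [h3, h5, hr2, div_le_div_iff₀ (by positivity) (by positivity)]
  nlinarith [pow_le_pow_left₀ hD0.le hDR 5, pow_pos hR0 4, pow_pos hR0 8, sq_nonneg (R^2)]

lemma arith2 {r d : ℝ} (hd : 0 < d) (hdr : d ≤ r) (hr2 : r < 2) :
    (2/r)*((Real.log r - Real.log d) + 1/r) + 2/r^2 ≤
      6*(1+r^2)/(r ^ ((3:ℝ)/2) * d ^ ((5:ℝ)/2)) := by
  have hr : 0 < r := lt_of_lt_of_le hd hdr
  set R := Real.sqrt r with hR
  set D := Real.sqrt d with hD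
  have hR0 : 0 < R := Real.sqrt_pos.mpr hr
  have hD0 : 0 < D := Real.sqrt_pos.mpr hd
  have hDR : D ≤ R := Real.sqrt_le_sqrt hdr
  have hr2' : r = R^2 := (Real.sq_sqrt hr.le).symm
  have hd2 : d = D^2 := (Real.sq_sqrt hd.le).symm
  have h3 : r ^ ((3:ℝ)/2) = R^3 := by rw [show ((3:ℝ)/2) = ((3:ℕ):ℝ)/2 by norm_num]; exact rpow_sqrt hr.le 3
  have h5 : d ^ ((5:ℝ)/2) = D^5 := by rw [show ((5:ℝ)/2) = ((5:ℕ):ℝ)/2 by norm_num]; exact rpow_sqrt hd.le 5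
  -- log bound
  have hlog : Real.log r - Real.log d ≤ (2/5) * (R^5/D^5) := by
    rw [← Real.log_div hr.ne' hd.ne']
    have h1 : Real.log (r/d) = (2/5) * Real.log ((r/d) ^ ((5:ℝ)/2)) := by
      rw [Real.log_rpow (by positivity)]; ring
    have h2 : (r/d) ^ ((5:ℝ)/2) = R^5/D^5 := by
      rw [Real.div_rpow hr.le hd.le, h5, show ((5:ℝ)/2) = ((5:ℕ):ℝ)/2 by norm_num, rpow_sqrt hr.le 5]
    have h4 : Real.log ((r/d) ^ ((5:ℝ)/2)) ≤ (r/d) ^ ((5:ℝ)/2) := by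
      have := Real.log_le_sub_one_of_pos (x := (r/d) ^ ((5:ℝ)/2)) (by positivity)
      linarith
    calc Real.log (r/d) = (2/5) * Real.log ((r/d) ^ ((5:ℝ)/2)) := h1
      _ ≤ (2/5) * ((r/d) ^ ((5:ℝ)/2)) := by linarith
      _ = (2/5) * (R^5/D^5) := by rw [h2]
  have step1 : (2/r)*((Real.log r - Real.log d) + 1/r) + 2/r^2 ≤
      ((4/5)*R^7 + 4*D^5)/(R^4*D^5) := by
    have hmono : (2/r)*((Real.log r - Real.log d) + 1/r) + 2/r^2 ≤
        (2/r)*((2/5)*(R^5/D^5) + 1/r) + 2/r^2 := by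
      have : (0:ℝ) < 2/r := by positivity
      nlinarith [hlog]
    refine hmono.trans (le_of_eq ?_)
    rw [hr2']
    field_simp
    ring
  refine step1.trans ?_
  rw [h3, h5, hr2', div_le_div_iff₀ (by positivity) (by positivity)]
  have hD5 : D^5 ≤ R^5 := pow_le_pow_left₀ hD0.le hDR 5
  have hR22 : R^2 < 2 := by rw [← hr2']; exact hr2
  have key : (4/5)*R^7 + 4*D^5 ≤ 6*(1+(R^2)^2)*R := by
    nlinarith [mul_nonneg (sub_nonneg.mpr hR22.le) (pow_pos hR0 5).le, hR0.le, pow_pos hR0 5]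
  calc (4/5*R^7 + 4*D^5)*(R^3*D^5) ≤ (6*(1+(R^2)^2)*R)*(R^3*D^5) :=
        mul_le_mul_of_nonneg_right key (by positivity)
    _ = 6*(1+(R^2)^2)*(R^4*D^5) := by ring

/-- The set {0} ∪ {1/n : n ≥ 1} ⊆ ℂ. -/
def recipSet : Set ℂ := insert 0 {z : ℂ | ∃ n : ℕ, 1 ≤ n ∧ z = 1 / (n : ℂ)}



lemma recip_pos (lam : ℂ) (hlam : lam ∉ recipSet) : 0 < Metric.infDist lam recipSet := by
  have hne : recipSet.Nonempty := ⟨0, Or.inl rfl⟩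
  have hlam0 : lam ≠ 0 := fun h => hlam (h ▸ Or.inl rfl)
  have hr : 0 < ‖lam‖ := norm_pos_iff.mpr hlam0
  set r := ‖lam‖ with hrdef
  set K := ⌈2/r⌉₊ with hK
  set T : Finset ℝ := insert (r/2) ((Finset.Icc 1 K).image (fun n : ℕ => dist lam (1/(n:ℂ)))) with hT
  have hTne : T.Nonempty := ⟨r/2, Finset.mem_insert_self _ _⟩
  set b := T.min' hTne with hb
  have hbpos : 0 < b := by
    rw [hb, Finset.lt_min'_iff]
    intro y hy
    rw [hT, Finset.mem_insert] at hy
    rcases hy with rfl | hy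
    · positivity
    · obtain ⟨n, hn, rfl⟩ := Finset.mem_image.mp hy
      rw [dist_pos]
      intro h
      exact hlam (Or.inr ⟨n, (Finset.mem_Icc.mp hn).1, h⟩)
  have hkey : ∀ y ∈ recipSet, b ≤ dist lam y := by
    intro y hy
    rcases hy with rfl | ⟨n, hn1, rfl⟩
    · have h1 : b ≤ r/2 := Finset.min'_le _ _ (Finset.mem_insert_self _ _)
      rw [dist_zero_right]
      linarith
    · by_cases hnK : n ≤ K
      · exact Finset.min'_le _ _ (Finset.mem_insert_of_mem
          (Finset.mem_image_of_mem _ (Finset.mem_Icc.mpr ⟨hn1, hnK⟩)))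
      · push_neg at hnK
        have hn0 : (0:ℝ) < n := by exact_mod_cast hn1
        have h2r : 2/r < (n:ℝ) := by
          calc 2/r ≤ (K:ℝ) := Nat.le_ceil _
            _ < n := by exact_mod_cast hnK
        have hsm : ‖1/(n:ℂ)‖ < r/2 := by
          rw [norm_div, norm_one, Complex.norm_natCast]
          rw [div_lt_iff₀ hn0]
          rw [div_lt_iff₀ hr] at h2r
          linarith
        have hnorm := norm_sub_norm_le lam (1/(n:ℂ))
        rw [dist_eq_norm]
        have h1 : b ≤ r/2 := Finset.min'_le _ _ (Finset.mem_insert_self _ _)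
        linarith
  by_contra hcon
  push_neg at hcon
  have : Metric.infDist lam recipSet < b := lt_of_le_of_lt hcon hbpos
  obtain ⟨y, hy, hdy⟩ := (Metric.infDist_lt_iff hne).mp this
  exact absurd hdy (not_lt.mpr (hkey y hy))


/-- with d(λ) = dist(λ, {0} ∪ {1/n : n ≥ 1}) > 0 and a(λ) = Re(1/λ),
one has u(λ)·N^{−a(λ)} ≤ ∏_{n=1}^N |1 − 1/(nλ)| with
u(λ) = exp(−1/|λ| − 6(1+|λ|²)/(|λ|^{3/2} d(λ)^{5/2})). -/
theorem stmt10 (lam : ℂ) (hlam : lam ∉ recipSet) :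
    0 < Metric.infDist lam recipSet ∧
      ∀ N : ℕ, 1 ≤ N →
        Real.exp (-(1 / ‖lam‖) -
            6 * (1 + (‖lam‖) ^ 2) /
              ((‖lam‖) ^ ((3 : ℝ) / 2) *
                (Metric.infDist lam recipSet) ^ ((5 : ℝ) / 2))) *
          (N : ℝ) ^ (-(1 / lam).re) ≤
        ∏ n ∈ Finset.Icc 1 N, ‖1 - 1 / ((n : ℂ) * lam)‖ := by
  have hd' : 0 < Metric.infDist lam recipSet := recip_pos lam hlam
  refine ⟨hd', fun N hN => ?_⟩
  have hlam0 : lam ≠ 0 := fun h => hlam (h ▸ Or.inl rfl)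
  set r := ‖lam‖ with hrdef
  set d := Metric.infDist lam recipSet with hddef
  set a := (1/lam).re with hadef
  have hr : 0 < r := norm_pos_iff.mpr hlam0
  have hdr : d ≤ r := by
    have := Metric.infDist_le_dist_of_mem (x := lam) (show (0:ℂ) ∈ recipSet from Or.inl rfl)
    rwa [dist_zero_right] at this
  have ha : |a| ≤ 1/r := by
    have h1 := Complex.abs_re_le_norm (1/lam)
    rwa [norm_div, norm_one] at h1
  have habs : ∀ n : ℕ, 1 ≤ n →
      ‖1 - 1/((n:ℂ)*lam)‖ = ‖lam - 1/(n:ℂ)‖ / r := by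
    intro n hn
    have hn0 : (n:ℂ) ≠ 0 := Nat.cast_ne_zero.mpr (by omega)
    have hid : (1:ℂ) - 1/((n:ℂ)*lam) = (lam - 1/(n:ℂ))/lam := by
      field_simp
    rw [hid, norm_div]
  have hlb : ∀ n : ℕ, 1 ≤ n → d/r ≤ ‖1 - 1/((n:ℂ)*lam)‖ := by
    intro n hn
    rw [habs n hn]
    have hmem : (1/(n:ℂ)) ∈ recipSet := Or.inr ⟨n, hn, rfl⟩
    have h1 : d ≤ ‖lam - 1/(n:ℂ)‖ := by
      have := Metric.infDist_le_dist_of_mem (x := lam) hmem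
      rwa [dist_eq_norm] at this
    gcongr
  have hpos : ∀ n : ℕ, 1 ≤ n → 0 < ‖1 - 1/((n:ℂ)*lam)‖ := by
    intro n hn
    exact lt_of_lt_of_le (by positivity) (hlb n hn)
  have hre : ∀ n : ℕ, 1 ≤ n → (1/((n:ℂ)*lam)).re = a/(n:ℝ) := by
    intro n hn
    have hn0 : ((n:ℝ)) ≠ 0 := by positivity
    have hid : (1:ℂ)/((n:ℂ)*lam) = (((1/(n:ℝ)):ℝ):ℂ) * (1/lam) := by
      push_cast
      ring
    rw [hid, Complex.re_ofReal_mul, hadef]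
    ring
  have habsw : ∀ n : ℕ, 1 ≤ n → ‖1/((n:ℂ)*lam)‖ = 1/((n:ℝ)*r) := by
    intro n hn
    rw [norm_div, norm_one, norm_mul, Complex.norm_natCast]
  -- per-term bound
  set g : ℕ → ℝ := fun n => if (n:ℝ)*r < 2 then Real.log (d/r) - 1/((n:ℝ)*r)
    else -(1/((n:ℝ)^2*r^2)) with hgdef
  have hterm : ∀ n ∈ Finset.Icc 1 N, (-a)/(n:ℝ) + g n ≤
      Real.log (‖1 - 1/((n:ℂ)*lam)‖) := by
    intro n hn
    obtain ⟨hn1, _⟩ := Finset.mem_Icc.mp hn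
    have hn0 : (0:ℝ) < (n:ℝ) := by exact_mod_cast hn1
    by_cases hc : (n:ℝ)*r < 2
    · rw [hgdef]
      simp only [if_pos hc]
      have h1 : Real.log (d/r) ≤ Real.log (‖1 - 1/((n:ℂ)*lam)‖) :=
        Real.log_le_log (by positivity) (hlb n hn1)
      have h2 : (-a)/(n:ℝ) ≤ 1/((n:ℝ)*r) := by
        rw [div_le_div_iff₀ hn0 (by positivity)]
        have h3 : (-a) * ((n:ℝ)*r) ≤ (1/r)*((n:ℝ)*r) :=
          mul_le_mul_of_nonneg_right (by linarith [(abs_le.mp ha).1]) (by positivity)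
        have h4 : (1/r)*((n:ℝ)*r) = (n:ℝ) := by field_simp
        linarith
      linarith
    · rw [hgdef]
      simp only [if_neg hc]
      push_neg at hc
      have hw : ‖1/((n:ℂ)*lam)‖ ≤ 1/2 := by
        rw [habsw n hn1]
        rw [div_le_div_iff₀ (by positivity) (by norm_num)]
        linarith
      have := log_one_sub_ge hw
      rw [habsw n hn1, hre n hn1] at this
      have heq : (1/((n:ℝ)*r))^2 = 1/((n:ℝ)^2*r^2) := by ring
      rw [heq] at this
      have : -a/(n:ℝ) = -(a/(n:ℝ)) := by ring
      linarith [log_one_sub_ge hw, this]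
  -- sum of g bound
  have harith1 : 2/r^2 ≤ 6*(1+r^2)/(r ^ ((3:ℝ)/2) * d ^ ((5:ℝ)/2)) := arith1 hd' hdr
  have harith2 : ∀ _ : r < 2, (2/r)*((Real.log r - Real.log d) + 1/r) + 2/r^2 ≤
      6*(1+r^2)/(r ^ ((3:ℝ)/2) * d ^ ((5:ℝ)/2)) := fun h => arith2 hd' hdr h
  have hsum2 : ∑ n ∈ Finset.Icc 1 N, (1:ℝ)/(n:ℝ)^2 ≤ 2 := sum_inv_sq_le N
  classical
  have hB : -(2/r^2) ≤ ∑ n ∈ (Finset.Icc 1 N).filter (fun n : ℕ => ¬ ((n:ℝ)*r < 2)), g n := by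
    have heq : ∀ n ∈ (Finset.Icc 1 N).filter (fun n : ℕ => ¬ ((n:ℝ)*r < 2)),
        g n = -((1:ℝ)/(n:ℝ)^2 * (1/r^2)) := by
      intro n hn
      rw [hgdef]
      simp only [if_neg (Finset.mem_filter.mp hn).2]
      ring
    have hBeq : ∑ n ∈ (Finset.Icc 1 N).filter (fun n : ℕ => ¬ ((n:ℝ)*r < 2)), g n =
        -((∑ n ∈ (Finset.Icc 1 N).filter (fun n : ℕ => ¬ ((n:ℝ)*r < 2)), (1:ℝ)/(n:ℝ)^2) * (1/r^2)) := by
      rw [Finset.sum_congr rfl heq, Finset.sum_neg_distrib, Finset.sum_mul]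
    rw [hBeq, neg_le_neg_iff]
    have h1 : ∑ n ∈ (Finset.Icc 1 N).filter (fun n : ℕ => ¬ ((n:ℝ)*r < 2)), (1:ℝ)/(n:ℝ)^2 ≤
        ∑ n ∈ Finset.Icc 1 N, (1:ℝ)/(n:ℝ)^2 :=
      Finset.sum_le_sum_of_subset_of_nonneg (Finset.filter_subset _ _)
        (fun n _ _ => by positivity)
    have h2 : (0:ℝ) ≤ 1/r^2 := by positivity
    calc (∑ n ∈ (Finset.Icc 1 N).filter (fun n : ℕ => ¬ ((n:ℝ)*r < 2)), (1:ℝ)/(n:ℝ)^2) * (1/r^2)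
        ≤ 2 * (1/r^2) := by
          apply mul_le_mul_of_nonneg_right _ h2
          exact le_trans h1 hsum2
      _ = 2/r^2 := by ring
  have hg : -(6*(1+r^2)/(r ^ ((3:ℝ)/2) * d ^ ((5:ℝ)/2))) ≤ ∑ n ∈ Finset.Icc 1 N, g n := by
    rw [← Finset.sum_filter_add_sum_filter_not (Finset.Icc 1 N) (fun n : ℕ => (n:ℝ)*r < 2)]
    rcases Finset.eq_empty_or_nonempty ((Finset.Icc 1 N).filter (fun n : ℕ => (n:ℝ)*r < 2)) with
      hemp | ⟨n₀, hn₀⟩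
    · rw [hemp, Finset.sum_empty]
      linarith
    · -- r < 2
      have hn₀' := Finset.mem_filter.mp hn₀
      have hr2 : r < 2 := by
        have h1 : (1:ℝ) ≤ (n₀:ℝ) := by exact_mod_cast (Finset.mem_Icc.mp hn₀'.1).1
        nlinarith [hn₀'.2]
      -- card bound
      set S₁ := (Finset.Icc 1 N).filter (fun n : ℕ => (n:ℝ)*r < 2) with hS₁
      have hsub : S₁ ⊆ Finset.Icc 1 ⌊2/r⌋₊ := by
        intro n hn
        obtain ⟨hmem, hlt⟩ := Finset.mem_filter.mp hn
        refine Finset.mem_Icc.mpr ⟨(Finset.mem_Icc.mp hmem).1, Nat.le_floor ?_⟩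
        have hn0 : (0:ℝ) < (n:ℝ) := by
          exact_mod_cast (Finset.mem_Icc.mp hmem).1
        rw [le_div_iff₀ hr]
        nlinarith
      have hcard : (S₁.card : ℝ) ≤ 2/r := by
        calc (S₁.card : ℝ) ≤ ((Finset.Icc 1 ⌊2/r⌋₊).card : ℝ) := by
              exact_mod_cast Finset.card_le_card hsub
          _ = (⌊2/r⌋₊ : ℝ) := by rw [Nat.card_Icc]; simp
          _ ≤ 2/r := Nat.floor_le (by positivity)
      have hA : (S₁.card : ℝ) * (Real.log (d/r) - 1/r) ≤ ∑ n ∈ S₁, g n := by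
        have hple : ∀ n ∈ S₁, Real.log (d/r) - 1/r ≤ g n := by
          intro n hn
          obtain ⟨hmem, hlt⟩ := Finset.mem_filter.mp hn
          have hn1 : 1 ≤ n := (Finset.mem_Icc.mp hmem).1
          have hn0 : (1:ℝ) ≤ (n:ℝ) := by exact_mod_cast hn1
          rw [hgdef]
          simp only [if_pos hlt]
          have : 1/((n:ℝ)*r) ≤ 1/r := by
            apply div_le_div_of_nonneg_left (by norm_num) hr ?_ |>.trans
            · exact le_refl _
            · nlinarith
          linarith
        have h := Finset.card_nsmul_le_sum S₁ g (Real.log (d/r) - 1/r) hple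
        simpa [nsmul_eq_mul] using h
      have ht0 : Real.log (d/r) - 1/r ≤ 0 := by
        have : Real.log (d/r) ≤ 0 :=
          Real.log_nonpos (by positivity) (by rw [div_le_one hr]; exact hdr)
        have : (0:ℝ) < 1/r := by positivity
        linarith
      have hA2 : (2/r) * (Real.log (d/r) - 1/r) ≤ (S₁.card : ℝ) * (Real.log (d/r) - 1/r) :=
        mul_le_mul_of_nonpos_right hcard ht0
      have hlogdiv : Real.log (d/r) = Real.log d - Real.log r :=
        Real.log_div hd'.ne' hr.ne'
      have := harith2 hr2
      rw [hlogdiv] at hA2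
      -- combine
      have hfin : -(6*(1+r^2)/(r ^ ((3:ℝ)/2) * d ^ ((5:ℝ)/2))) ≤
          (2/r) * ((Real.log d - Real.log r) - 1/r) - 2/r^2 := by
        nlinarith [this]
      rw [hlogdiv] at hA
      linarith
  -- harmonic bounds
  have hH1 : Real.log N ≤ ∑ n ∈ Finset.Icc 1 N, (1:ℝ)/(n:ℝ) := harmonic_lo N hN
  have hH2 : ∑ n ∈ Finset.Icc 1 N, (1:ℝ)/(n:ℝ) ≤ Real.log N + 1 := harmonic_up N
  set H := ∑ n ∈ Finset.Icc 1 N, (1:ℝ)/(n:ℝ) with hHdef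
  have haH : -a * Real.log N - 1/r ≤ -a * H := by
    rcases le_or_gt 0 a with hc | hc
    · have h1 : a * H ≤ a * (Real.log N + 1) := mul_le_mul_of_nonneg_left hH2 hc
      have h3 : a * (Real.log N + 1) = a * Real.log N + a := by ring
      have h2 : a ≤ 1/r := (abs_le.mp ha).2
      linarith
    · have h1 : (-a) * Real.log N ≤ (-a) * H :=
        mul_le_mul_of_nonneg_left hH1 (by linarith)
      have h2 : (0:ℝ) < 1/r := by positivity
      have h3 : (-a) * Real.log N = -(a * Real.log N) := by ring
      have h4 : (-a) * H = -(a*H) := by ring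
      linarith
  -- split the sum
  have hsplit : ∑ n ∈ Finset.Icc 1 N, ((-a)/(n:ℝ) + g n) = -a * H + ∑ n ∈ Finset.Icc 1 N, g n := by
    rw [Finset.sum_add_distrib, hHdef, Finset.mul_sum]
    congr 1
    exact Finset.sum_congr rfl (fun n _ => by ring)
  have hsum : -a * H + ∑ n ∈ Finset.Icc 1 N, g n ≤
      ∑ n ∈ Finset.Icc 1 N, Real.log (‖1 - 1/((n:ℂ)*lam)‖) := by
    rw [← hsplit]
    exact Finset.sum_le_sum hterm
  have hcore : -(1/r) - 6*(1+r^2)/(r ^ ((3:ℝ)/2) * d ^ ((5:ℝ)/2)) + Real.log N * (-a) ≤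
      ∑ n ∈ Finset.Icc 1 N, Real.log (‖1 - 1/((n:ℂ)*lam)‖) := by
    have : Real.log N * (-a) = -a * Real.log N := by ring
    linarith [hg, haH, hsum]
  -- finish
  have hN0 : (0:ℝ) < (N:ℝ) := by exact_mod_cast hN
  have hgoal : Real.exp (-(1/r) - 6*(1+r^2)/(r ^ ((3:ℝ)/2) * d ^ ((5:ℝ)/2))) * (N:ℝ) ^ (-a) ≤
      ∏ n ∈ Finset.Icc 1 N, ‖1 - 1/((n:ℂ)*lam)‖ := by
    calc Real.exp (-(1/r) - 6*(1+r^2)/(r ^ ((3:ℝ)/2) * d ^ ((5:ℝ)/2))) * (N:ℝ) ^ (-a)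
        = Real.exp (-(1/r) - 6*(1+r^2)/(r ^ ((3:ℝ)/2) * d ^ ((5:ℝ)/2)) + Real.log N * (-a)) := by
          rw [Real.rpow_def_of_pos hN0, Real.exp_add]
      _ ≤ Real.exp (∑ n ∈ Finset.Icc 1 N, Real.log (‖1 - 1/((n:ℂ)*lam)‖)) :=
          Real.exp_le_exp.mpr hcore
      _ = ∏ n ∈ Finset.Icc 1 N, ‖1 - 1/((n:ℂ)*lam)‖ := by
          rw [Real.exp_sum]
          exact Finset.prod_congr rfl (fun n hn => Real.exp_log (hpos n (Finset.mem_Icc.mp hn).1))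
  exact hgoal
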